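/- arXiv:2412.13216 — 3 statements merged into one kernel-verified Lean document; each statement's English description precedes it below -/
import Mathlib

section
/- Under the same hypotheses (sub-pulse a supported in [−T_a/2, T_a/2], 0 < T_a < T, energy 1/N, second moments finite, and additionally a even), the second central moment of u(t) = ∑_{n=0}^{N−1} a(t − nT − T_a/2) about t̄ = (T(N−1)+T_a)/2 equals ΔT² = N·∫ t²|a(t)|² dt + T²(N²−1)/12. -/
open MeasureTheory Finset

lemma sum_range_id_real (N : ℕ) : ∑ n ∈ Finset.range N, (n : ℝ) = N * (N - 1) / 2 := by
  induction N with
  | zero => simp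
  | succ k ih => rw [Finset.sum_range_succ, ih]; push_cast; ring

lemma sum_range_sq_real (N : ℕ) :
    ∑ n ∈ Finset.range N, (n : ℝ) ^ 2 = N * (N - 1) * (2 * N - 1) / 6 := by
  induction N with
  | zero => simp
  | succ k ih => rw [Finset.sum_range_succ, ih]; push_cast; ring

theorem ddop_time_dispersion
    (N : ℕ) (hN : 1 ≤ N) (T Ta : ℝ) (hTa : 0 < Ta) (hTaT : Ta < T)
    (a : ℝ → ℂ)
    (ha_even : ∀ t : ℝ, a (-t) = a t)
    (ha_int : Integrable (fun t : ℝ => ‖a t‖ ^ 2))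
    (ha2_int : Integrable (fun t : ℝ => t ^ 2 * ‖a t‖ ^ 2))
    (ha_supp : ∀ t : ℝ, Ta / 2 < |t| → a t = 0)
    (ha_energy : (∫ t : ℝ, ‖a t‖ ^ 2) = 1 / (N : ℝ))
    (u : ℝ → ℂ)
    (hu : u = fun t => ∑ n ∈ Finset.range N, a (t - (n : ℝ) * T - Ta / 2)) :
    (∫ t : ℝ, (t - (T * ((N : ℝ) - 1) + Ta) / 2) ^ 2 * ‖u t‖ ^ 2)
      = (N : ℝ) * (∫ t : ℝ, t ^ 2 * ‖a t‖ ^ 2) + T ^ 2 * ((N : ℝ) ^ 2 - 1) / 12 := by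
  have hNR : (0 : ℝ) < N := by exact_mod_cast hN
  set tb : ℝ := (T * ((N : ℝ) - 1) + Ta) / 2 with htb
  set d : ℕ → ℝ := fun n => (n : ℝ) * T + Ta / 2 with hd
  -- support: a x ≠ 0 → |x| ≤ Ta/2
  have hsupp' : ∀ x : ℝ, a x ≠ 0 → |x| ≤ Ta / 2 := by
    intro x hx
    by_contra h
    exact hx (ha_supp x (lt_of_not_ge h))
  -- disjointness
  have hkey : ∀ (t : ℝ) (n m : ℕ), a (t - d n) ≠ 0 → a (t - d m) ≠ 0 → n = m := by
    intro t n m hn hm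
    have h1 := hsupp' _ hn
    have h2 := hsupp' _ hm
    have hdiff : |d n - d m| ≤ Ta := by
      have := abs_sub (t - d n) (t - d m)
      calc |d n - d m| = |(t - d m) - (t - d n)| := by ring_nf
        _ ≤ |t - d m| + |t - d n| := abs_sub _ _
        _ ≤ Ta / 2 + Ta / 2 := add_le_add h2 h1
        _ = Ta := by ring
    have hdm : d n - d m = ((n : ℝ) - m) * T := by simp [hd]; ring
    by_contra hne
    have hz : ((n : ℤ) - m) ≠ 0 := by
      intro h; apply hne; omega
    have h1le : (1 : ℝ) ≤ |(n : ℝ) - m| := by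
      have := Int.one_le_abs hz
      have : (1 : ℝ) ≤ |((n : ℤ) - m : ℤ)| := by exact_mod_cast this
      simpa using this
    have : T ≤ |(n : ℝ) - m| * T := le_mul_of_one_le_left (le_of_lt (hTa.trans hTaT)) h1le
    have : T ≤ Ta := by
      calc T ≤ |(n : ℝ) - m| * T := this
        _ = |((n : ℝ) - m) * T| := by
            rw [abs_mul, abs_of_pos (hTa.trans hTaT)]
        _ = |d n - d m| := by rw [hdm]
        _ ≤ Ta := hdiff
    linarith
  -- pointwise norm-squared decomposition
  have hpt : ∀ t : ℝ, ‖u t‖ ^ 2 = ∑ n ∈ Finset.range N, ‖a (t - d n)‖ ^ 2 := by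
    intro t
    have hut : u t = ∑ n ∈ Finset.range N, a (t - d n) := by
      rw [hu]; apply Finset.sum_congr rfl; intro n _; congr 1; simp [hd]; ring
    by_cases hex : ∃ n ∈ Finset.range N, a (t - d n) ≠ 0
    · obtain ⟨n₀, hn₀, hne⟩ := hex
      have hzero : ∀ b ∈ Finset.range N, b ≠ n₀ → a (t - d b) = 0 := by
        intro b _ hb
        by_contra hbne
        exact hb (hkey t b n₀ hbne hne)
      rw [hut, Finset.sum_eq_single_of_mem n₀ hn₀ hzero,
        Finset.sum_eq_single_of_mem n₀ hn₀ (fun b hb hbn => by rw [hzero b hb hbn]; simp)]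
    · push_neg at hex
      rw [hut, Finset.sum_eq_zero (fun n hn => hex n hn), Finset.sum_eq_zero
        (fun n hn => by rw [hex n hn]; simp)]
      simp
  -- integrability of s * ‖a s‖²
  have hsa_int : Integrable (fun s : ℝ => s * ‖a s‖ ^ 2) := by
    apply Integrable.mono' (ha2_int.add ha_int)
    · exact (aemeasurable_id.mul ha_int.aemeasurable).aestronglyMeasurable
    · filter_upwards with s
      have h1 : |s| ≤ s ^ 2 + 1 := by nlinarith [abs_nonneg s, sq_abs s]
      have h2 : (0:ℝ) ≤ ‖a s‖ ^ 2 := by positivity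
      calc ‖s * ‖a s‖ ^ 2‖ = |s| * ‖a s‖ ^ 2 := by
            rw [norm_mul, Real.norm_eq_abs]; simp [abs_of_nonneg h2]
        _ ≤ (s ^ 2 + 1) * ‖a s‖ ^ 2 := by nlinarith
        _ = s ^ 2 * ‖a s‖ ^ 2 + ‖a s‖ ^ 2 := by ring
  -- odd integral vanishes
  have hodd : (∫ s : ℝ, s * ‖a s‖ ^ 2) = 0 := by
    have h1 : (∫ s : ℝ, (-s) * ‖a (-s)‖ ^ 2) = ∫ s : ℝ, s * ‖a s‖ ^ 2 :=
      integral_neg_eq_self (fun s : ℝ => s * ‖a s‖ ^ 2) volume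
    have h2 : (∫ s : ℝ, (-s) * ‖a (-s)‖ ^ 2) = - ∫ s : ℝ, s * ‖a s‖ ^ 2 := by
      rw [← integral_neg]
      apply integral_congr_ae
      filter_upwards with s
      rw [ha_even]; ring
    linarith [h1, h2.symm]
  -- integrability and value of shifted integrals
  have hG_int : ∀ c : ℝ, Integrable (fun s : ℝ => (s + c) ^ 2 * ‖a s‖ ^ 2) := by
    intro c
    have : (fun s : ℝ => (s + c) ^ 2 * ‖a s‖ ^ 2)
        = fun s => s ^ 2 * ‖a s‖ ^ 2 + ((2 * c) * (s * ‖a s‖ ^ 2) + c ^ 2 * ‖a s‖ ^ 2) := by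
      funext s; ring
    rw [this]
    exact ha2_int.add ((hsa_int.const_mul _).add (ha_int.const_mul _))
  have hG_val : ∀ c : ℝ, (∫ s : ℝ, (s + c) ^ 2 * ‖a s‖ ^ 2)
      = (∫ s : ℝ, s ^ 2 * ‖a s‖ ^ 2) + c ^ 2 / N := by
    intro c
    have B : (∫ s : ℝ, (s ^ 2 * ‖a s‖ ^ 2 + (2 * c) * (s * ‖a s‖ ^ 2)))
        = (∫ s : ℝ, s ^ 2 * ‖a s‖ ^ 2) + ∫ s : ℝ, (2 * c) * (s * ‖a s‖ ^ 2) :=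
      integral_add ha2_int (hsa_int.const_mul _)
    have A : (∫ s : ℝ, ((s ^ 2 * ‖a s‖ ^ 2 + (2 * c) * (s * ‖a s‖ ^ 2)) + c ^ 2 * ‖a s‖ ^ 2))
        = (∫ s : ℝ, (s ^ 2 * ‖a s‖ ^ 2 + (2 * c) * (s * ‖a s‖ ^ 2)))
          + ∫ s : ℝ, c ^ 2 * ‖a s‖ ^ 2 :=
      integral_add (ha2_int.add (hsa_int.const_mul _)) (ha_int.const_mul _)
    calc (∫ s : ℝ, (s + c) ^ 2 * ‖a s‖ ^ 2)
        = ∫ s : ℝ, ((s ^ 2 * ‖a s‖ ^ 2 + (2 * c) * (s * ‖a s‖ ^ 2)) + c ^ 2 * ‖a s‖ ^ 2) := by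
          apply integral_congr_ae; filter_upwards with s; ring
      _ = ((∫ s : ℝ, s ^ 2 * ‖a s‖ ^ 2) + ∫ s : ℝ, (2 * c) * (s * ‖a s‖ ^ 2))
            + ∫ s : ℝ, c ^ 2 * ‖a s‖ ^ 2 := by rw [A, B]
      _ = (∫ s : ℝ, s ^ 2 * ‖a s‖ ^ 2) + c ^ 2 / N := by
          rw [integral_const_mul, integral_const_mul, hodd, ha_energy]; ring
  -- each shifted term
  have hterm_int : ∀ n : ℕ, Integrable (fun t : ℝ => (t - tb) ^ 2 * ‖a (t - d n)‖ ^ 2) := by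
    intro n
    have h : Integrable (fun t : ℝ => ((t - d n) + (d n - tb)) ^ 2 * ‖a (t - d n)‖ ^ 2) :=
      (hG_int (d n - tb)).comp_sub_right (d n)
    apply h.congr
    filter_upwards with t; ring
  have hterm_val : ∀ n : ℕ, (∫ t : ℝ, (t - tb) ^ 2 * ‖a (t - d n)‖ ^ 2)
      = (∫ s : ℝ, s ^ 2 * ‖a s‖ ^ 2) + (d n - tb) ^ 2 / N := by
    intro n
    have h2 : (∫ t : ℝ, ((t - d n) + (d n - tb)) ^ 2 * ‖a (t - d n)‖ ^ 2)
        = ∫ s : ℝ, (s + (d n - tb)) ^ 2 * ‖a s‖ ^ 2 :=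
      integral_sub_right_eq_self (fun s : ℝ => (s + (d n - tb)) ^ 2 * ‖a s‖ ^ 2) (d n)
    calc (∫ t : ℝ, (t - tb) ^ 2 * ‖a (t - d n)‖ ^ 2)
        = ∫ t : ℝ, ((t - d n) + (d n - tb)) ^ 2 * ‖a (t - d n)‖ ^ 2 := by
          apply integral_congr_ae; filter_upwards with t; ring
      _ = ∫ s : ℝ, (s + (d n - tb)) ^ 2 * ‖a s‖ ^ 2 := h2
      _ = (∫ s : ℝ, s ^ 2 * ‖a s‖ ^ 2) + (d n - tb) ^ 2 / N := hG_val _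
  -- main computation
  have hLHS : (∫ t : ℝ, (t - tb) ^ 2 * ‖u t‖ ^ 2)
      = ∑ n ∈ Finset.range N, ∫ t : ℝ, (t - tb) ^ 2 * ‖a (t - d n)‖ ^ 2 := by
    rw [← integral_finset_sum _ (fun n _ => hterm_int n)]
    apply integral_congr_ae
    filter_upwards with t
    rw [hpt t, Finset.mul_sum]
  rw [hLHS]
  have : ∑ n ∈ Finset.range N, (∫ t : ℝ, (t - tb) ^ 2 * ‖a (t - d n)‖ ^ 2)
      = ∑ n ∈ Finset.range N,
        ((∫ s : ℝ, s ^ 2 * ‖a s‖ ^ 2) + (d n - tb) ^ 2 / N) :=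
    Finset.sum_congr rfl (fun n _ => hterm_val n)
  rw [this, Finset.sum_add_distrib, Finset.sum_const, Finset.card_range, nsmul_eq_mul]
  have hc : ∀ n : ℕ, (d n - tb) ^ 2 / (N : ℝ)
      = (T ^ 2 / N) * (n : ℝ) ^ 2 - (T ^ 2 * ((N : ℝ) - 1) / N) * (n : ℝ)
        + T ^ 2 * ((N : ℝ) - 1) ^ 2 / (4 * N) := by
    intro n
    have : d n - tb = T * (n : ℝ) - T * ((N : ℝ) - 1) / 2 := by
      simp only [hd, htb]; ring
    rw [this]
    field_simp
    ring
  rw [Finset.sum_congr rfl (fun n _ => hc n)]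
  rw [Finset.sum_add_distrib, Finset.sum_sub_distrib, ← Finset.mul_sum, ← Finset.mul_sum,
    sum_range_id_real, sum_range_sq_real, Finset.sum_const, Finset.card_range, nsmul_eq_mul]
  have hNne : (N : ℝ) ≠ 0 := ne_of_gt hNR
  field_simp
  ring
end

section
/- For M, T, β > 0 with 0 ≤ β ≤ 1, the second frequency moment of the RRC magnitude spectrum with energy normalization T/M equals M²/(12T²) + ((π² − 8)M²β²)/(4π²T²). That is, letting |Ã(f)|² = (T/M) for |f| ≤ M(1−β)/(2T), |Ã(f)|² = (T/(2M))(1 + cos((πT/(βM))(|f| − M(1−β)/(2T)))) for M(1−β)/(2T) ≤ |f| ≤ M(1+β)/(2T), and 0 otherwise, one has ∫_{-∞}^{∞} f² |Ã(f)|² df = M²/(12T²) + (π²−8)M²β²/(4π²T²). -/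
open MeasureTheory Real

/-! The spectrum is even in `f`, so the moment is twice the one-sided integral over `[0, b]`,
`b = M(1+β)/(2T)`. The flat part up to `a = M(1-β)/(2T)` contributes `a³/3`; on the rolloff the
cosine term reduces to `∫ₐᵇ x² cos(c(x - a)) dx = -2(a + b)/c²` for `c(b - a) = π`, because the
antiderivative `x² sin/c + 2x cos/c² - 2 sin/c³` has `sin = 0` and `cos = ±1` at both ends. -/

open Set

noncomputable def raisedCosineProfile (K a b x : ℝ) : ℝ :=
  if x ≤ a then K else if x ≤ b then K / 2 * (1 + cos (π / (b - a) * (x - a))) else 0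

theorem hasDerivAt_sq_mul_cos_antideriv {c : ℝ} (hc : c ≠ 0) (a x : ℝ) :
    HasDerivAt (fun x => x ^ 2 * sin (c * (x - a)) / c + 2 * x * cos (c * (x - a)) / c ^ 2
      - 2 * sin (c * (x - a)) / c ^ 3) (x ^ 2 * cos (c * (x - a))) x := by
  have harg : HasDerivAt (fun x => c * (x - a)) c x := by
    simpa using ((hasDerivAt_id x).sub_const a).const_mul c
  have hsin := (hasDerivAt_sin _).comp x harg
  have hcos := (hasDerivAt_cos _).comp x harg
  refine (((((hasDerivAt_pow 2 x).mul hsin).div_const c).add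
      ((((hasDerivAt_id' x).const_mul 2).mul hcos).div_const (c ^ 2))).sub
      ((hsin.const_mul 2).div_const (c ^ 3))).congr_deriv ?_
  simp only [Function.comp_apply]
  field_simp
  ring

theorem integral_sq_mul_cos_of_mul_sub_eq_pi {a b c : ℝ} (hc : c ≠ 0) (hπ : c * (b - a) = π) :
    ∫ x in a..b, x ^ 2 * cos (c * (x - a)) = -2 * (a + b) / c ^ 2 := by
  rw [intervalIntegral.integral_eq_sub_of_hasDerivAt
    (fun x _ => hasDerivAt_sq_mul_cos_antideriv hc a x)
    (by apply Continuous.intervalIntegrable; fun_prop)]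
  simp only [hπ, sub_self, mul_zero, sin_pi, cos_pi, sin_zero, cos_zero]
  field_simp
  ring

section raisedCosineProfile

variable {K a b x : ℝ}

theorem raisedCosineProfile_of_le (hx : x ≤ a) : raisedCosineProfile K a b x = K := by
  simp only [raisedCosineProfile, if_pos hx]

theorem raisedCosineProfile_of_mem_Icc (hx : x ∈ Icc a b) :
    raisedCosineProfile K a b x = K / 2 * (1 + cos (π / (b - a) * (x - a))) := by
  rcases hx.1.eq_or_lt with rfl | hax
  · simp only [raisedCosineProfile_of_le le_rfl, sub_self, mul_zero, cos_zero]
    ring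
  · simp only [raisedCosineProfile, if_neg (not_le.2 hax), if_pos hx.2]

theorem raisedCosineProfile_of_lt (hab : a ≤ b) (hx : b < x) : raisedCosineProfile K a b x = 0 := by
  simp only [raisedCosineProfile, if_neg (not_le.2 hx), if_neg (not_le.2 (hab.trans_lt hx))]

end raisedCosineProfile

theorem integral_sq_mul_one_add_cos_of_mul_sub_eq_pi {a b c : ℝ} (K : ℝ) (hc : c ≠ 0)
    (hπ : c * (b - a) = π) :
    ∫ x in a..b, x ^ 2 * (K / 2 * (1 + cos (c * (x - a))))
      = K / 2 * ((b ^ 3 - a ^ 3) / 3 - 2 * (a + b) / c ^ 2) := by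
  have h_expand : ∀ x, x ^ 2 * (K / 2 * (1 + cos (c * (x - a))))
      = K / 2 * (x ^ 2 + x ^ 2 * cos (c * (x - a))) := fun x => by ring
  simp_rw [h_expand]
  rw [intervalIntegral.integral_const_mul, intervalIntegral.integral_add
    (by apply Continuous.intervalIntegrable; fun_prop)
    (by apply Continuous.intervalIntegrable; fun_prop),
    integral_pow, integral_sq_mul_cos_of_mul_sub_eq_pi hc hπ]
  ring

theorem integral_Ioi_sq_mul_raisedCosineProfile {K a b : ℝ} (ha : 0 ≤ a) (hab : a < b) :
    ∫ x in Ioi 0, x ^ 2 * raisedCosineProfile K a b x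
      = K * ((a ^ 3 + b ^ 3) / 6 - (a + b) * (b - a) ^ 2 / π ^ 2) := by
  set g := fun x => x ^ 2 * raisedCosineProfile K a b x
  set c := π / (b - a)
  have hba : b - a ≠ 0 := (sub_pos.2 hab).ne'
  have hcπ : c * (b - a) = π := div_mul_cancel₀ π hba
  set roll := fun x => x ^ 2 * (K / 2 * (1 + cos (c * (x - a))))
  have h_flat : EqOn g (fun x => K * x ^ 2) (uIcc 0 a) := fun x hx => by
    rw [uIcc_of_le ha] at hx
    simp only [g, raisedCosineProfile_of_le hx.2, mul_comm]
  have h_roll : EqOn g roll (uIcc a b) := fun x hx => by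
    rw [uIcc_of_le hab.le] at hx
    simp only [g, roll, c, raisedCosineProfile_of_mem_Icc hx]
  have h_supp : ∀ x ∈ Ioi 0 \ Ioc 0 b, g x = 0 := by
    rintro x ⟨hx0, hxb⟩
    have hbx : b < x := not_le.1 fun hxb' => hxb ⟨hx0, hxb'⟩
    simp only [g, raisedCosineProfile_of_lt hab.le hbx, mul_zero]
  have i_flat : IntervalIntegrable g volume 0 a :=
    (continuous_const.mul (continuous_pow 2)).intervalIntegrable _ _ |>.congr
      (h_flat.symm.mono uIoc_subset_uIcc)
  have i_roll : IntervalIntegrable g volume a b :=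
    (by fun_prop : Continuous roll).intervalIntegrable _ _ |>.congr
      (h_roll.symm.mono uIoc_subset_uIcc)
  calc ∫ x in Ioi 0, g x = ∫ x in Ioc 0 b, g x :=
        setIntegral_eq_of_subset_of_forall_sdiff_eq_zero measurableSet_Ioi Ioc_subset_Ioi_self
          h_supp
    _ = (∫ x in (0)..a, g x) + ∫ x in a..b, g x := by
        rw [← intervalIntegral.integral_of_le (ha.trans hab.le),
          intervalIntegral.integral_add_adjacent_intervals i_flat i_roll]
    _ = K * (a ^ 3 / 3) + K / 2 * ((b ^ 3 - a ^ 3) / 3 - 2 * (a + b) / c ^ 2) := by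
        rw [intervalIntegral.integral_congr h_flat, intervalIntegral.integral_congr h_roll,
          intervalIntegral.integral_const_mul, integral_pow,
          integral_sq_mul_one_add_cos_of_mul_sub_eq_pi K (div_ne_zero pi_ne_zero hba) hcπ]
        ring
    _ = K * ((a ^ 3 + b ^ 3) / 6 - (a + b) * (b - a) ^ 2 / π ^ 2) := by
        simp only [c]
        field_simp
        ring

theorem rrc_second_frequency_moment
    (M T β : ℝ) (hM : 0 < M) (hT : 0 < T) (hβ : 0 < β) (hβ1 : β ≤ 1)
    (A2 : ℝ → ℝ)
    (hA2 : A2 = fun f =>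
      if |f| ≤ M * (1 - β) / (2 * T) then T / M
      else if |f| ≤ M * (1 + β) / (2 * T) then
        (T / (2 * M)) *
          (1 + Real.cos ((Real.pi * T / (β * M)) * (|f| - M * (1 - β) / (2 * T))))
      else 0) :
    (∫ f : ℝ, f ^ 2 * A2 f)
      = M ^ 2 / (12 * T ^ 2)
        + (Real.pi ^ 2 - 8) * M ^ 2 * β ^ 2 / (4 * Real.pi ^ 2 * T ^ 2) := by
  set a := M * (1 - β) / (2 * T)
  set b := M * (1 + β) / (2 * T)
  have ha : 0 ≤ a := div_nonneg (mul_nonneg hM.le (sub_nonneg.2 hβ1)) (by positivity)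
  have hab : a < b := div_lt_div_of_pos_right (by nlinarith) (by positivity)
  have hA2_profile : A2 = fun f => raisedCosineProfile (T / M) a b |f| := by
    have hc : π / (b - a) = π * T / (β * M) := by
      simp only [a, b]
      field_simp [hβ.ne']
      ring
    simp only [hA2, raisedCosineProfile, hc]
    field_simp
  calc ∫ f, f ^ 2 * A2 f = ∫ f, (fun x => x ^ 2 * raisedCosineProfile (T / M) a b x) |f| := by
        simp only [hA2_profile, sq_abs]
    _ = 2 * ((T / M) * ((a ^ 3 + b ^ 3) / 6 - (a + b) * (b - a) ^ 2 / π ^ 2)) := by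
        rw [integral_comp_abs (f := fun x => x ^ 2 * raisedCosineProfile (T / M) a b x),
          integral_Ioi_sq_mul_raisedCosineProfile ha hab]
    _ = _ := by
        simp only [a, b]
        field_simp
        ring
end

section
/- For the general DDOP ū(t) = ∑_{n=−D}^{N−1+D} ā(t − (n+D)T − T_a/2) with ā even, supported in [−T_a/2, T_a/2], T_a < T, energy 1/(N+2D), and D a nonnegative integer: the energy of ū is 1 and its time dispersion satisfies ΔT² = (N+2D)∫t²|ā(t)|²dt + T²((N+2D)²−1)/12. -/
/-!
Because `T_a < T`, the sub-pulses have pairwise disjoint supports, so `|ū|²` is the sum of the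
translates `|ā(t - cₙ)|²` with `cₙ = nT + T_a/2`. Each translate carries energy `1/M`
(`M = N + 2D`), and since `ā` is even its second moment about `μ` is
`∫ t²|ā|² + (cₙ - μ)²/M` (parallel-axis theorem). The centres are equally spaced with mean `μ`,
so `∑ (cₙ - μ)² = T² M (M² - 1) / 12`.
-/

open MeasureTheory Finset

lemma norm_sum_pow_of_pairwise_eq_zero_or_eq_zero {ι E : Type*} [SeminormedAddCommGroup E]
    (s : Finset ι) (v : ι → E) (hv : (s : Set ι).Pairwise fun i j => v i = 0 ∨ v j = 0)
    {p : ℕ} (hp : p ≠ 0) :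
    ‖∑ i ∈ s, v i‖ ^ p = ∑ i ∈ s, ‖v i‖ ^ p := by
  by_cases h : ∃ k ∈ s, v k ≠ 0
  · obtain ⟨k, hks, hk⟩ := h
    have hzero : ∀ i ∈ s, i ≠ k → v i = 0 := fun i hi hik =>
      (hv hi hks hik).resolve_right hk
    rw [sum_eq_single_of_mem k hks hzero,
      sum_eq_single_of_mem k hks fun i hi hik => by simp [hzero i hi hik, hp]]
  · push Not at h
    rw [sum_eq_zero h, sum_eq_zero fun i hi => by simp [h i hi, hp], norm_zero, zero_pow hp]

lemma translates_eq_zero_or_eq_zero {E : Type*} [Zero E] {a : ℝ → E} {r T : ℝ}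
    (ha : ∀ t, r < |t| → a t = 0) (hrT : 2 * r < T) (s x : ℝ) {i j : ℕ} (hij : i ≠ j) :
    a (x - (i * T + s)) = 0 ∨ a (x - (j * T + s)) = 0 := by
  by_contra! h
  have hi : |x - (i * T + s)| ≤ r := not_lt.mp fun hlt => h.1 (ha _ hlt)
  have hj : |x - (j * T + s)| ≤ r := not_lt.mp fun hlt => h.2 (ha _ hlt)
  have hdist : |((i : ℝ) - j) * T| ≤ 2 * r := by
    calc |((i : ℝ) - j) * T| = |(x - (j * T + s)) - (x - (i * T + s))| := by ring_nf
      _ ≤ |x - (j * T + s)| + |x - (i * T + s)| := abs_sub _ _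
      _ ≤ 2 * r := by linarith
  have hone : (1 : ℝ) ≤ |(i : ℝ) - j| := by
    exact_mod_cast Int.one_le_abs (sub_ne_zero.mpr (Int.ofNat_inj.not.mpr hij))
  have : T ≤ |((i : ℝ) - j) * T| := by
    rw [abs_mul]
    nlinarith [le_abs_self T, abs_nonneg T]
  linarith

lemma integrable_mul_of_integrable_sq_mul {f : ℝ → ℝ} (hf : Integrable f)
    (hf₂ : Integrable fun t => t ^ 2 * f t) : Integrable fun t => t * f t := by
  refine (hf.abs.add hf₂.abs).mono' (aestronglyMeasurable_id.mul hf.aestronglyMeasurable)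
    (Filter.Eventually.of_forall fun t => ?_)
  -- `|t * f t| ≤ |f t| + |t ^ 2 * f t|` because `|t| ≤ 1 + t ^ 2`
  simp only [Pi.add_apply, Real.norm_eq_abs, abs_mul, abs_sq]
  nlinarith [abs_nonneg (f t), abs_nonneg t, sq_abs t, sq_nonneg (|t| - 1)]

lemma integral_mul_eq_zero_of_even {f : ℝ → ℝ} (hf : ∀ t, f (-t) = f t) :
    ∫ t, t * f t = 0 := by
  have h := integral_neg_eq_self (fun t : ℝ => t * f t) volume
  simp only [hf, neg_mul, integral_neg] at h
  linarith

lemma integrable_add_sq_mul {f : ℝ → ℝ} (hf : Integrable f)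
    (hf₂ : Integrable fun t => t ^ 2 * f t) (d : ℝ) :
    Integrable fun t => (t + d) ^ 2 * f t := by
  have h₁ := integrable_mul_of_integrable_sq_mul hf hf₂
  have hexpand : (fun t => (t + d) ^ 2 * f t)
      = fun t => t ^ 2 * f t + 2 * d * (t * f t) + d ^ 2 * f t := by
    ext t
    ring
  rw [hexpand]
  exact (hf₂.add (h₁.const_mul (2 * d))).add (hf.const_mul (d ^ 2))

lemma integral_add_sq_mul_of_even {f : ℝ → ℝ} (hf_even : ∀ t, f (-t) = f t) (hf : Integrable f)
    (hf₂ : Integrable fun t => t ^ 2 * f t) (d : ℝ) :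
    ∫ t, (t + d) ^ 2 * f t = (∫ t, t ^ 2 * f t) + d ^ 2 * ∫ t, f t := by
  have h₁ := integrable_mul_of_integrable_sq_mul hf hf₂
  calc ∫ t, (t + d) ^ 2 * f t
      = ∫ t, (t ^ 2 * f t + 2 * d * (t * f t) + d ^ 2 * f t) := by
        congr with t
        ring
    _ = (∫ t, t ^ 2 * f t) + 2 * d * (∫ t, t * f t) + d ^ 2 * ∫ t, f t := by
        rw [integral_add ?_ (hf.const_mul _), integral_add hf₂ (h₁.const_mul _),
          integral_const_mul, integral_const_mul]
        exact hf₂.add (h₁.const_mul _)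
    _ = (∫ t, t ^ 2 * f t) + d ^ 2 * ∫ t, f t := by
        rw [integral_mul_eq_zero_of_even hf_even, mul_zero, add_zero]

section Translates

variable {ι : Type*} (s : Finset ι) (c : ι → ℝ) {f : ℝ → ℝ}

lemma integral_sum_translates (hf : Integrable f) :
    ∫ t, ∑ i ∈ s, f (t - c i) = #s * ∫ t, f t := by
  rw [integral_finsetSum _ fun i _ => hf.comp_sub_right (c i)]
  simp only [integral_sub_right_eq_self, sum_const, nsmul_eq_mul]

lemma integral_sub_sq_mul_sum_translates (μ : ℝ) (hf_even : ∀ t, f (-t) = f t)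
    (hf : Integrable f) (hf₂ : Integrable fun t => t ^ 2 * f t) :
    ∫ t, (t - μ) ^ 2 * ∑ i ∈ s, f (t - c i)
      = #s * (∫ t, t ^ 2 * f t) + (∑ i ∈ s, (c i - μ) ^ 2) * ∫ t, f t := by
  have hshift : ∀ i, (fun t => (t - μ) ^ 2 * f (t - c i))
      = fun t => (fun x => (x + (c i - μ)) ^ 2 * f x) (t - c i) := fun i => by
    ext t
    ring_nf
  simp_rw [mul_sum]
  rw [integral_finsetSum _ fun i _ =>
    hshift i ▸ (integrable_add_sq_mul hf hf₂ _).comp_sub_right (c i)]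
  have hterm : ∀ i, ∫ t, (t - μ) ^ 2 * f (t - c i)
      = (∫ t, t ^ 2 * f t) + (c i - μ) ^ 2 * ∫ t, f t := fun i => by
    rw [hshift i, integral_sub_right_eq_self (fun x => (x + (c i - μ)) ^ 2 * f x),
      integral_add_sq_mul_of_even hf_even hf hf₂]
  simp only [hterm, sum_add_distrib, sum_const, nsmul_eq_mul, sum_mul]

end Translates

lemma sum_range_add_sq (M : ℕ) (x : ℝ) :
    ∑ n ∈ range M, ((n : ℝ) + x) ^ 2
      = M * x ^ 2 + M * (M - 1) * x + M * (M - 1) * (2 * M - 1) / 6 := by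
  induction M with
  | zero => simp
  | succ m ih =>
    rw [sum_range_succ, ih]
    push_cast
    ring

lemma sum_range_sub_mean_sq (M : ℕ) :
    ∑ n ∈ range M, ((n : ℝ) - (M - 1) / 2) ^ 2 = M * ((M : ℝ) ^ 2 - 1) / 12 := by
  have h := sum_range_add_sq M (-(((M : ℝ) - 1) / 2))
  simp only [← sub_eq_add_neg] at h
  rw [h]
  ring

theorem general_ddop_time_dispersion_general
    (N D : ℕ) (hN : 1 ≤ N) (T Ta : ℝ) (hTaT : Ta < T)
    (a : ℝ → ℂ)
    (ha_even : ∀ t : ℝ, a (-t) = a t)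
    (ha_int : Integrable (fun t : ℝ => ‖a t‖ ^ 2))
    (ha2_int : Integrable (fun t : ℝ => t ^ 2 * ‖a t‖ ^ 2))
    (ha_supp : ∀ t : ℝ, Ta / 2 < |t| → a t = 0)
    (ha_energy : (∫ t : ℝ, ‖a t‖ ^ 2) = 1 / ((N : ℝ) + 2 * (D : ℝ)))
    (u : ℝ → ℂ)
    (hu : u = fun t => ∑ n ∈ Finset.range (N + 2 * D), a (t - (n : ℝ) * T - Ta / 2)) :
    (∫ t : ℝ, ‖u t‖ ^ 2) = 1 ∧
    (∫ t : ℝ, (t - (T * (((N : ℝ) + 2 * (D : ℝ)) - 1) + Ta) / 2) ^ 2 * ‖u t‖ ^ 2)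
      = ((N : ℝ) + 2 * (D : ℝ)) * (∫ t : ℝ, t ^ 2 * ‖a t‖ ^ 2)
        + T ^ 2 * (((N : ℝ) + 2 * (D : ℝ)) ^ 2 - 1) / 12 := by
  have hM : ((N + 2 * D : ℕ) : ℝ) = (N : ℝ) + 2 * (D : ℝ) := by push_cast; ring
  have hM0 : (N : ℝ) + 2 * (D : ℝ) ≠ 0 := by rw [← hM]; exact Nat.cast_ne_zero.mpr (by omega)
  have hu_sq : ∀ t, ‖u t‖ ^ 2 = ∑ n ∈ range (N + 2 * D), ‖a (t - (n * T + Ta / 2))‖ ^ 2 := by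
    intro t
    simp only [hu, sub_sub]
    exact norm_sum_pow_of_pairwise_eq_zero_or_eq_zero _ _
      (fun i _ j _ hij => translates_eq_zero_or_eq_zero ha_supp (by linarith) _ _ hij)
      two_ne_zero
  have hcenters : ∑ n ∈ range (N + 2 * D),
      ((n : ℝ) * T + Ta / 2 - (T * (((N : ℝ) + 2 * (D : ℝ)) - 1) + Ta) / 2) ^ 2
      = T ^ 2 * ((N : ℝ) + 2 * (D : ℝ)) * (((N : ℝ) + 2 * (D : ℝ)) ^ 2 - 1) / 12 := by
    rw [← hM, mul_assoc, mul_div_assoc, ← sum_range_sub_mean_sq, mul_sum]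
    refine sum_congr rfl fun n _ => ?_
    ring
  have ha_norm_even : ∀ t : ℝ, ‖a (-t)‖ ^ 2 = ‖a t‖ ^ 2 := by simp [ha_even]
  simp only [hu_sq]
  rw [integral_sum_translates _ _ ha_int,
    integral_sub_sq_mul_sum_translates _ _ _ ha_norm_even ha_int ha2_int, hcenters, ha_energy,
    card_range, hM]
  exact ⟨by field_simp, by field_simp⟩

theorem general_ddop_time_dispersion
    (N D : ℕ) (hN : 1 ≤ N) (T Ta : ℝ) (hTa : 0 < Ta) (hTaT : Ta < T)
    (a : ℝ → ℂ)
    (ha_even : ∀ t : ℝ, a (-t) = a t)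
    (ha_int : Integrable (fun t : ℝ => ‖a t‖ ^ 2))
    (ha2_int : Integrable (fun t : ℝ => t ^ 2 * ‖a t‖ ^ 2))
    (ha_supp : ∀ t : ℝ, Ta / 2 < |t| → a t = 0)
    (ha_energy : (∫ t : ℝ, ‖a t‖ ^ 2) = 1 / ((N : ℝ) + 2 * (D : ℝ)))
    (u : ℝ → ℂ)
    (hu : u = fun t => ∑ n ∈ Finset.range (N + 2 * D), a (t - (n : ℝ) * T - Ta / 2)) :
    (∫ t : ℝ, ‖u t‖ ^ 2) = 1 ∧
    (∫ t : ℝ, (t - (T * (((N : ℝ) + 2 * (D : ℝ)) - 1) + Ta) / 2) ^ 2 * ‖u t‖ ^ 2)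
      = ((N : ℝ) + 2 * (D : ℝ)) * (∫ t : ℝ, t ^ 2 * ‖a t‖ ^ 2)
        + T ^ 2 * (((N : ℝ) + 2 * (D : ℝ)) ^ 2 - 1) / 12 :=
  general_ddop_time_dispersion_general N D hN T Ta hTaT a ha_even ha_int ha2_int ha_supp ha_energy u
    hu
end
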